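/- Let σ > 0 and let μ satisfy 0 < μ < μ₃(σ), where μ₃(σ) = (σ + 1)/(3σ + 4), and let d̃₁ = (1/2 + δ̃(σ,μ), 1/2 − δ̃(σ,μ)) with δ̃(σ,μ) = √(−(3σ² + 4σ)μ² − 2(σ² + 3σ + 2)μ + (σ + 1)²) / (2(σμ + σ + 1)). Then the Jacobian matrix J of the map F(x,y) = (F₁(x,y), F₂(x,y)) at d̃₁ (the 2×2 matrix of partial derivatives of F₁ and F₂ with respect to x and y) satisfies J₁₁ = J₂₂ and J₁₂ = J₂₁, and both of its (real) eigenvalues J₁₁ + J₁₂ and J₁₁ − J₁₂ are strictly negative; that is, the stable divergent state d̃₁ is a sink. -/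

import Mathlib

noncomputable def F1 (σ μ x y : ℝ) : ℝ :=
  ((1 - x) - μ) * x * (x + σ * x * (1 - y)) - (x - μ) * (1 - x) * ((1 - x) + σ * (1 - x) * y)

noncomputable def F2 (σ μ x y : ℝ) : ℝ :=
  ((1 - y) - μ) * y * (y + σ * y * (1 - x)) - (y - μ) * (1 - y) * ((1 - y) + σ * (1 - y) * x)

noncomputable def deltaTilde (σ μ : ℝ) : ℝ :=
  Real.sqrt (-(3 * σ^2 + 4 * σ) * μ^2 - 2 * (σ^2 + 3 * σ + 2) * μ + (σ + 1)^2) /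
    (2 * (σ * μ + σ + 1))

/-- The entries of the Jacobian matrix of the vector field (F₁, F₂) at a point (x₀, y₀):
`J i j` is the partial derivative of the `i`-th component with respect to the `j`-th variable. -/
noncomputable def jacobian (σ μ x₀ y₀ : ℝ) : Matrix (Fin 2) (Fin 2) ℝ :=
  !![deriv (fun x => F1 σ μ x y₀) x₀, deriv (fun y => F1 σ μ x₀ y) y₀;
     deriv (fun x => F2 σ μ x y₀) x₀, deriv (fun y => F2 σ μ x₀ y) y₀]

/-!
The field is odd under the point reflection `(x, y) ↦ (1 - x, 1 - y)`, and `F₂` is `F₁` with its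
variables swapped; together these force the Jacobian at any point of the antidiagonal `x + y = 1`
into the form `!![p, q; q, p]`, with eigenvalues `p ± q`. Writing `A = σμ + σ + 1` and
`B = (σ + 1) - (3σ + 4)μ`, the radicand in `δ̃` is `A * B`, so `4 A δ̃² = B`, and `B > 0` is exactly
`μ < μ₃(σ)`. Eliminating `δ̃²` from the entries at `(1/2 + δ̃, 1/2 - δ̃)` gives `p - q = -B` and
`A (p + q) = -(A B + 2σ(σ + 2)μ²)`, both negative.
-/

lemma hasDerivAt_cubic (a b c e t : ℝ) :
    HasDerivAt (fun t => a * t ^ 3 + b * t ^ 2 + c * t + e) (3 * a * t ^ 2 + 2 * b * t + c) t := by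
  refine HasDerivAt.congr_deriv ((((hasDerivAt_pow 3 t).const_mul a).add
    ((hasDerivAt_pow 2 t).const_mul b)).add ((hasDerivAt_id t).const_mul c) |>.add_const e) ?_
  norm_num
  ring

def dF1dx (σ μ x y : ℝ) : ℝ :=
  3 * (-2 - σ) * x ^ 2 + 2 * (3 + σ + σ * y - σ * μ + 2 * σ * μ * y) * x
    + (-1 - 2 * μ - σ * y - 2 * σ * μ * y)

def dF1dy (σ μ x : ℝ) : ℝ :=
  σ * (x ^ 2 - x + μ * (2 * x ^ 2 - 2 * x + 1))

lemma hasDerivAt_F1_fst (σ μ x y : ℝ) : HasDerivAt (fun x => F1 σ μ x y) (dF1dx σ μ x y) x := by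
  have hcubic : (fun x => F1 σ μ x y) = fun x => (-2 - σ) * x ^ 3
      + (3 + σ + σ * y - σ * μ + 2 * σ * μ * y) * x ^ 2
      + (-1 - 2 * μ - σ * y - 2 * σ * μ * y) * x + (μ + σ * μ * y) := by
    funext x
    unfold F1
    ring
  rw [hcubic]
  exact hasDerivAt_cubic _ _ _ _ x

lemma hasDerivAt_F1_snd (σ μ x y : ℝ) : HasDerivAt (fun y => F1 σ μ x y) (dF1dy σ μ x) y := by
  have haffine : (fun y => F1 σ μ x y) = fun y => y * dF1dy σ μ x
      + (-x + 3 * x ^ 2 - 2 * x ^ 3 + μ - 2 * μ * x + σ * x ^ 2 - σ * x ^ 3 - σ * μ * x ^ 2) := by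
    funext y
    unfold F1 dF1dy
    ring
  rw [haffine]
  exact (hasDerivAt_mul_const _).add_const _

lemma dF1dx_one_sub_swap (σ μ x : ℝ) : dF1dx σ μ (1 - x) x = dF1dx σ μ x (1 - x) := by
  unfold dF1dx
  ring

lemma dF1dy_one_sub (σ μ x : ℝ) : dF1dy σ μ (1 - x) = dF1dy σ μ x := by
  unfold dF1dy
  ring

lemma F2_eq_F1_swap (σ μ x y : ℝ) : F2 σ μ x y = F1 σ μ y x := rfl

lemma jacobian_eq (σ μ x y : ℝ) :
    jacobian σ μ x y = !![dF1dx σ μ x y, dF1dy σ μ x; dF1dy σ μ y, dF1dx σ μ y x] := by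
  simp only [jacobian, F2_eq_F1_swap, (hasDerivAt_F1_fst _ _ _ _).deriv,
    (hasDerivAt_F1_snd _ _ _ _).deriv]

lemma jacobian_of_add_eq_one {σ μ x y : ℝ} (hxy : x + y = 1) :
    jacobian σ μ x y = !![dF1dx σ μ x y, dF1dy σ μ x; dF1dy σ μ x, dF1dx σ μ x y] := by
  obtain rfl : y = 1 - x := by linarith
  rw [jacobian_eq, dF1dx_one_sub_swap, dF1dy_one_sub]

lemma four_mul_deltaTilde_sq {σ μ : ℝ} (hA : σ * μ + σ + 1 ≠ 0)
    (hAB : 0 ≤ (σ * μ + σ + 1) * ((σ + 1) - (3 * σ + 4) * μ)) :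
    4 * (σ * μ + σ + 1) * deltaTilde σ μ ^ 2 = (σ + 1) - (3 * σ + 4) * μ := by
  have hrad : -(3 * σ ^ 2 + 4 * σ) * μ ^ 2 - 2 * (σ ^ 2 + 3 * σ + 2) * μ + (σ + 1) ^ 2
      = (σ * μ + σ + 1) * ((σ + 1) - (3 * σ + 4) * μ) := by ring
  rw [deltaTilde, hrad]
  generalize σ * μ + σ + 1 = A at hA hAB ⊢
  rw [div_pow, Real.sq_sqrt hAB]
  field_simp
  ring

lemma dF1dx_sub_dF1dy_of_sq_eq {σ μ d : ℝ}
    (hd : 4 * (σ * μ + σ + 1) * d ^ 2 = (σ + 1) - (3 * σ + 4) * μ) :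
    dF1dx σ μ (1/2 + d) (1/2 - d) - dF1dy σ μ (1/2 + d) = -((σ + 1) - (3 * σ + 4) * μ) := by
  unfold dF1dx dF1dy
  linear_combination (-3 / 2 : ℝ) * hd

lemma mul_dF1dx_add_dF1dy_of_sq_eq {σ μ d : ℝ}
    (hd : 4 * (σ * μ + σ + 1) * d ^ 2 = (σ + 1) - (3 * σ + 4) * μ) :
    (σ * μ + σ + 1) * (dF1dx σ μ (1/2 + d) (1/2 - d) + dF1dy σ μ (1/2 + d))
      = -((σ * μ + σ + 1) * ((σ + 1) - (3 * σ + 4) * μ) + 2 * σ * (σ + 2) * μ ^ 2) := by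
  unfold dF1dx dF1dy
  linear_combination (-(6 + 4 * σ + 2 * σ * μ) / 4) * hd

theorem divergent_state_is_sink (σ μ : ℝ) (hσ : 0 < σ)
    (hlo : 0 < μ) (hhi : μ < (σ + 1) / (3 * σ + 4)) :
    (jacobian σ μ (1/2 + deltaTilde σ μ) (1/2 - deltaTilde σ μ)) 0 0 =
      (jacobian σ μ (1/2 + deltaTilde σ μ) (1/2 - deltaTilde σ μ)) 1 1 ∧
    (jacobian σ μ (1/2 + deltaTilde σ μ) (1/2 - deltaTilde σ μ)) 0 1 =
      (jacobian σ μ (1/2 + deltaTilde σ μ) (1/2 - deltaTilde σ μ)) 1 0 ∧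
    (jacobian σ μ (1/2 + deltaTilde σ μ) (1/2 - deltaTilde σ μ)) 0 0 +
      (jacobian σ μ (1/2 + deltaTilde σ μ) (1/2 - deltaTilde σ μ)) 0 1 < 0 ∧
    (jacobian σ μ (1/2 + deltaTilde σ μ) (1/2 - deltaTilde σ μ)) 0 0 -
      (jacobian σ μ (1/2 + deltaTilde σ μ) (1/2 - deltaTilde σ μ)) 0 1 < 0 := by
  have hA : 0 < σ * μ + σ + 1 := by positivity
  have hB : 0 < (σ + 1) - (3 * σ + 4) * μ := by
    rw [lt_div_iff₀ (by positivity)] at hhi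
    linarith
  have hd := four_mul_deltaTilde_sq hA.ne' (mul_pos hA hB).le
  rw [jacobian_of_add_eq_one (by ring)]
  simp only [Matrix.of_apply, Matrix.cons_val', Matrix.cons_val_zero, Matrix.cons_val_one,
    Matrix.empty_val', Matrix.cons_val_fin_one, true_and]
  constructor
  · refine neg_of_mul_neg_right ?_ hA.le
    rw [mul_dF1dx_add_dF1dy_of_sq_eq hd]
    have hsq : 0 ≤ 2 * σ * (σ + 2) * μ ^ 2 := by positivity
    linarith [mul_pos hA hB]
  · linarith [dF1dx_sub_dF1dy_of_sq_eq hd]
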